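/- arXiv:1906.04523 — 2 statements merged into one kernel-verified Lean document; each statement's English description precedes it below -/
import Mathlib

section
/- The minimum of the dominator chromatic number χ_d(D) over all orientations D of the path P_6 equals 3. -/
/-- A vertex `v` dominates the color class of color `a` under coloring `c`:
the class is nonempty and every vertex of that color is an out-neighbor of `v`. -/
def Dominates {V α : Type*} (A : V → V → Prop) (c : V → α) (v : V) (a : α) : Prop :=
  (∃ w, c w = a) ∧ ∀ w, c w = a → A v w

/-- A dominator coloring of the digraph with arc relation `A`: a proper coloring
such that every vertex with positive out-degree dominates some color class. -/
def IsDominatorColoring {V α : Type*} (A : V → V → Prop) (c : V → α) : Prop :=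
  (∀ u v, A u v → c u ≠ c v) ∧ ∀ v, (∃ w, A v w) → ∃ a, Dominates A c v a

/-- The dominator chromatic number: the least `k` admitting a dominator coloring
with colors in `Fin k`. -/
noncomputable def domChrom {V : Type*} (A : V → V → Prop) : ℕ :=
  sInf {k | ∃ c : V → Fin k, IsDominatorColoring A c}

/-- The arc relation of the orientation of the path `P_n` (vertices `0,…,n-1`)
determined by `o`: the edge between `i` and `i+1` is directed `i → i+1`
when `o i = true` and `i+1 → i` when `o i = false`. -/
def pathArc (n : ℕ) (o : ℕ → Bool) (u v : Fin n) : Prop :=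
  ((u : ℕ) + 1 = (v : ℕ) ∧ o u = true) ∨ ((v : ℕ) + 1 = (u : ℕ) ∧ o v = false)

/-- The minimum of the dominator chromatic number over all orientations of `P_n`. -/
noncomputable def minDomChromPath (n : ℕ) : ℕ :=
  sInf {m | ∃ o : ℕ → Bool, m = domChrom (pathArc n o)}

/-! In a proper colouring of an oriented path with at most two colours, colours alternate, so every
colour class of `P_n` with `n ≥ 6` contains three vertices at pairwise distance at least two. Such a
class cannot lie in an out-neighbourhood, which is contained in `{v - 1, v + 1}`; hence
`χ_d ≥ 3` for every orientation. The orientation `0 ← 1 → 2 ← 3 → 4 ← 5` with colouring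
`0, 1, 0, 1, 2, 1` attains `3`. -/

open Function

section DominatorColoring

variable {V : Type*} {A : V → V → Prop}

lemma IsDominatorColoring.of_injective (hA : ∀ v, ¬ A v v) {α : Type*} {c : V → α}
    (hc : Injective c) : IsDominatorColoring A c :=
  ⟨fun u _ huv h => hA u (hc h ▸ huv),
    fun _ ⟨w, hw⟩ => ⟨c w, ⟨w, rfl⟩, fun _ h => hc h ▸ hw⟩⟩

lemma domChrom_le {k : ℕ} {c : V → Fin k} (hc : IsDominatorColoring A c) : domChrom A ≤ k :=
  Nat.sInf_le ⟨c, hc⟩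

end DominatorColoring

section PathArc

variable {n : ℕ} {o : ℕ → Bool}

lemma pathArc_irrefl (v : Fin n) : ¬ pathArc n o v v := by
  unfold pathArc
  omega

lemma val_eq_succ_or_succ_eq_of_pathArc {u v : Fin n} (h : pathArc n o u v) :
    (v : ℕ) = u + 1 ∨ (v : ℕ) + 1 = u := by
  rcases h with ⟨h, -⟩ | ⟨h, -⟩ <;> omega

lemma pathArc_or_pathArc_succ {i : ℕ} (hi : i + 1 < n) :
    pathArc n o ⟨i, by omega⟩ ⟨i + 1, hi⟩ ∨ pathArc n o ⟨i + 1, hi⟩ ⟨i, by omega⟩ := by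
  cases h : o i
  · exact .inr (.inr ⟨rfl, h⟩)
  · exact .inl (.inl ⟨rfl, h⟩)

lemma apply_ne_apply_succ_of_pathArc {α : Type*} {c : Fin n → α}
    (hc : ∀ u v, pathArc n o u v → c u ≠ c v) {i : ℕ} (hi : i + 1 < n) :
    c ⟨i, by omega⟩ ≠ c ⟨i + 1, hi⟩ := by
  rcases pathArc_or_pathArc_succ (o := o) hi with h | h
  · exact hc _ _ h
  · exact (hc _ _ h).symm

lemma apply_add_two_mul_eq_of_pathArc {k : ℕ} (hk : k ≤ 2) {c : Fin n → Fin k}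
    (hc : ∀ u v, pathArc n o u v → c u ≠ c v) {i : ℕ} (m : ℕ) (hm : i + 2 * m < n) :
    c ⟨i + 2 * m, hm⟩ = c ⟨i, by omega⟩ := by
  induction m with
  | zero => rfl
  | succ m ih =>
    have h₁ := apply_ne_apply_succ_of_pathArc hc (i := i + 2 * m) (by omega)
    have h₂ := apply_ne_apply_succ_of_pathArc hc (i := i + 2 * m + 1) (by omega)
    show c ⟨i + 2 * m + 1 + 1, hm⟩ = _
    rw [← ih (by omega)]
    simp only [ne_eq, Fin.ext_iff] at h₁ h₂ ⊢
    omega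

theorem three_le_domChrom_pathArc (hn : 6 ≤ n) (o : ℕ → Bool) : 3 ≤ domChrom (pathArc n o) := by
  refine le_csInf ⟨n, id, .of_injective pathArc_irrefl injective_id⟩ ?_
  rintro k ⟨c, hproper, hdom⟩
  by_contra! hk
  obtain ⟨v, hv⟩ : ∃ v, ∃ w, pathArc n o v w :=
    (pathArc_or_pathArc_succ (i := 0) (by omega)).elim (fun h => ⟨_, _, h⟩) (fun h => ⟨_, _, h⟩)
  obtain ⟨_, ⟨w, rfl⟩, hvw⟩ := hdom v hv
  have hcolor (m : ℕ) (hm : w % 2 + 2 * m < n) : c ⟨w % 2 + 2 * m, hm⟩ = c w :=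
    calc c ⟨w % 2 + 2 * m, hm⟩ = c ⟨w % 2, by omega⟩ :=
          apply_add_two_mul_eq_of_pathArc (by omega) hproper m hm
      _ = c ⟨w % 2 + 2 * (w / 2), by omega⟩ :=
          (apply_add_two_mul_eq_of_pathArc (by omega) hproper _ _).symm
      _ = c w := congrArg c (Fin.ext (Nat.mod_add_div w 2))
  have hnbr (m : ℕ) (hm : w % 2 + 2 * m < n) :
      w % 2 + 2 * m = v + 1 ∨ w % 2 + 2 * m + 1 = v :=
    val_eq_succ_or_succ_eq_of_pathArc (hvw _ (hcolor m hm))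
  have := hnbr 0 (by omega)
  have := hnbr 1 (by omega)
  have := hnbr 2 (by omega)
  omega

end PathArc

def alternatingOrientation (i : ℕ) : Bool := i % 2 = 1

lemma domChrom_pathArc_six_alternatingOrientation_le :
    domChrom (pathArc 6 alternatingOrientation) ≤ 3 :=
  domChrom_le (c := ![0, 1, 0, 1, 2, 1]) (by
    unfold IsDominatorColoring Dominates pathArc alternatingOrientation
    decide)

theorem min_domChrom_orientations_of_path_six : minDomChromPath 6 = 3 := by
  apply le_antisymm
  · calc minDomChromPath 6 ≤ domChrom (pathArc 6 alternatingOrientation) :=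
          Nat.sInf_le ⟨_, rfl⟩
      _ ≤ 3 := domChrom_pathArc_six_alternatingOrientation_le
  · exact le_csInf ⟨_, alternatingOrientation, rfl⟩ fun _ ⟨o, ho⟩ =>
      ho ▸ three_le_domChrom_pathArc le_rfl o
end

section
/- For every integer n ≥ 4 with n ≠ 6, every orientation D of the path P_n satisfies χ_d(D) ≥ f(n), where f(4k) = k+2, f(4k+1) = k+2, f(4k+2) = k+3, and f(4k+3) = k+3 for k ≥ 1. -/
/-!
Fix a dominator coloring with `m` colors of an orientation of `P_n` and let `d` be the number of
dominated colors. A dominated class has at most three vertices together with its dominators: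
a class with two vertices can only be dominated by their unique common neighbour, and a single
vertex only by its at most two neighbours. Every non-sink dominates a class and the sinks are
independent, so counting gives `n + n / 2 ≤ 3 d + #(vertices of undominated colors)`. The tails
of the edges `{4j, 4j + 1}` dominate classes lying in pairwise disjoint windows, so
`d ≥ (n + 2) / 4`, and every color class, being independent, has at most `(n + 1) / 2` vertices.
If two used colors are undominated then `m ≥ d + 2`; otherwise these bounds give
`m ≥ (n + 2) / 4 + 2` except for `n = 4`, checked exhaustively, and `n = 7`, where the only
undominated class and the set of sinks would both be `{0, 2, 4, 6}`, so that vertex `1` would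
dominate the undominated class.
-/

open Finset SimpleGraph

section Digraph

variable {V α : Type*} {A : V → V → Prop} {c : V → α}

lemma IsDominatorColoring.comp_injective {β : Type*} {f : α → β}
    (hc : IsDominatorColoring A c) (hf : Function.Injective f) :
    IsDominatorColoring A (f ∘ c) := by
  refine ⟨fun u v huv hfc => hc.1 u v huv (hf hfc), fun v hv => ?_⟩
  obtain ⟨a, ⟨w, hw⟩, hdom⟩ := hc.2 v hv
  exact ⟨f a, ⟨w, by simp [hw]⟩, fun w' hw' => hdom w' (hf hw')⟩

lemma exists_isDominatorColoring_domChrom [Fintype V] (hA : ∀ v, ¬ A v v) :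
    ∃ c : V → Fin (domChrom A), IsDominatorColoring A c := by
  let e := Fintype.equivFin V
  have he : IsDominatorColoring A e := by
    refine ⟨fun u v huv heq => hA u (e.injective heq ▸ huv), ?_⟩
    rintro v ⟨w, hw⟩
    exact ⟨e w, ⟨w, rfl⟩, fun w' hw' => e.injective hw' ▸ hw⟩
  exact Nat.sInf_mem (s := {k | ∃ c : V → Fin k, IsDominatorColoring A c}) ⟨_, e, he⟩

open scoped Classical in
noncomputable def tails [Fintype V] (A : V → V → Prop) : Finset V :=
  {v | ∃ w, A v w}

open scoped Classical in
noncomputable def colorClass [Fintype V] (c : V → α) (a : α) : Finset V :=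
  {v | c v = a}

open scoped Classical in
noncomputable def dominators [Fintype V] (A : V → V → Prop) (c : V → α) (a : α) :
    Finset V :=
  {v | Dominates A c v a}

open scoped Classical in
noncomputable def dominatedColors [Fintype α] (A : V → V → Prop) (c : V → α) : Finset α :=
  {a | ∃ v, Dominates A c v a}

lemma mem_dominatedColors [Fintype α] {a : α} :
    a ∈ dominatedColors A c ↔ ∃ v, Dominates A c v a := by
  simp [dominatedColors]

variable [Fintype V]

lemma mem_tails {v : V} : v ∈ tails A ↔ ∃ w, A v w := by
  simp [tails]

lemma mem_colorClass {a : α} {v : V} : v ∈ colorClass c a ↔ c v = a := by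
  simp [colorClass]

lemma mem_dominators {a : α} {v : V} : v ∈ dominators A c a ↔ Dominates A c v a := by
  simp [dominators]

variable [Fintype α] [DecidableEq α]

lemma card_add_card_tails_le (hc : IsDominatorColoring A c)
    (h3 : ∀ a ∈ dominatedColors A c, #(colorClass c a) + #(dominators A c a) ≤ 3) :
    Fintype.card V + #(tails A) ≤
      3 * #(dominatedColors A c) + #{v | c v ∉ dominatedColors A c} := by
  classical
  set D := dominatedColors A c
  have hV : Fintype.card V = ∑ a ∈ D, #(colorClass c a) + #{v | c v ∉ D} := by
    rw [← card_univ, ← card_filter_add_card_filter_not (s := univ) (fun v => c v ∈ D),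
      card_eq_sum_card_fiberwise (f := c) (t := D) (fun v hv => by simpa using hv)]
    congr 1
    refine sum_congr rfl fun a ha => congrArg card ?_
    ext v
    simp only [mem_colorClass, mem_filter, mem_univ, true_and]
    exact ⟨fun h => h.2, fun h => ⟨h ▸ ha, h⟩⟩
  have hT : #(tails A) ≤ ∑ a ∈ D, #(dominators A c a) := by
    refine le_trans (card_le_card fun v hv => ?_) card_biUnion_le
    obtain ⟨a, ha⟩ := hc.2 v (mem_tails.1 hv)
    exact mem_biUnion.2 ⟨a, mem_dominatedColors.2 ⟨v, ha⟩, mem_dominators.2 ha⟩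
  have h3D : ∑ a ∈ D, (#(colorClass c a) + #(dominators A c a)) ≤ #D * 3 :=
    sum_le_card_nsmul _ _ _ h3
  rw [sum_add_distrib] at h3D
  omega

lemma eq_empty_or_eq_colorClass_or_card_add_two_le (c : V → α) (D : Finset α) :
    ({v | c v ∉ D} : Finset V) = ∅ ∨
      (∃ b ∉ D, ({v | c v ∉ D} : Finset V) = colorClass c b) ∨
      #D + 2 ≤ Fintype.card α := by
  by_cases hD : ∀ v, c v ∈ D
  · exact Or.inl (filter_eq_empty_iff.2 fun v _ => not_not.2 (hD v))
  push Not at hD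
  obtain ⟨v₀, hv₀⟩ := hD
  by_cases hb : ∀ v, c v ∉ D → c v = c v₀
  · refine Or.inr (Or.inl ⟨c v₀, hv₀, ?_⟩)
    ext v
    rw [mem_filter_univ, mem_colorClass]
    exact ⟨hb v, fun h => h ▸ hv₀⟩
  push Not at hb
  obtain ⟨v₁, hv₁, hne⟩ := hb
  refine Or.inr (Or.inr ?_)
  calc #D + 2 = #(insert (c v₁) (insert (c v₀) D)) := by
        rw [card_insert_of_notMem (by simp [hne, hv₁]), card_insert_of_notMem hv₀]
    _ ≤ Fintype.card α := card_le_univ _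

end Digraph

section Path

variable {n m : ℕ} {o : ℕ → Bool} {c : Fin n → Fin m}

lemma pathArc_adj {u v : Fin n} (h : pathArc n o u v) : (pathGraph n).Adj u v := by
  rw [pathGraph_adj]
  rcases h with ⟨h, -⟩ | ⟨h, -⟩ <;> omega

lemma pathArc_or_pathArc_of_adj {u v : Fin n} (h : (pathGraph n).Adj u v) :
    pathArc n o u v ∨ pathArc n o v u := by
  rw [pathGraph_adj] at h
  unfold pathArc
  cases o u <;> cases o v <;> simp [h] <;> omega

lemma pathArc_congr {o' : ℕ → Bool} (h : ∀ i, i + 1 < n → o i = o' i) :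
    pathArc n o = pathArc n o' := by
  funext u v
  exact propext (or_congr (and_congr_right fun _ => by rw [h u (by omega)])
    (and_congr_right fun _ => by rw [h v (by omega)]))

lemma card_le_of_isIndepSet_pathGraph {S : Finset (Fin n)}
    (hS : (pathGraph n).IsIndepSet (S : Set (Fin n))) : #S ≤ (n + 1) / 2 := by
  calc #S ≤ #(range ((n + 1) / 2)) := by
        refine card_le_card_of_injOn (fun v => (v : ℕ) / 2) (fun v _ => ?_)
          fun u hu v hv huv => ?_
        · simp only [coe_range, Set.mem_Iio]
          omega
        · by_contra hne
          have : (u : ℕ) ≠ v := Fin.val_injective.ne hne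
          exact hS hu hv hne (pathGraph_adj.2 (by simp only at huv; omega))
    _ = (n + 1) / 2 := card_range _

lemma card_le_two_of_forall_pathGraph_adj {v : Fin n} {S : Finset (Fin n)}
    (hS : ∀ w ∈ S, (pathGraph n).Adj v w) : #S ≤ 2 := by
  calc #S ≤ #({(v : ℕ) - 1, (v : ℕ) + 1} : Finset ℕ) := by
        refine card_le_card_of_injOn (fun w => (w : ℕ)) (fun w hw => ?_) Fin.val_injective.injOn
        have := pathGraph_adj.1 (hS w hw)
        simp only [coe_insert, coe_singleton, Set.mem_insert_iff, Set.mem_singleton_iff]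
        omega
    _ ≤ 2 := card_le_two

lemma eq_of_pathGraph_adj_of_adj {u v w₁ w₂ : Fin n} (hne : w₁ ≠ w₂)
    (hu₁ : (pathGraph n).Adj u w₁) (hu₂ : (pathGraph n).Adj u w₂)
    (hv₁ : (pathGraph n).Adj v w₁) (hv₂ : (pathGraph n).Adj v w₂) : u = v := by
  rw [pathGraph_adj] at hu₁ hu₂ hv₁ hv₂
  have : (w₁ : ℕ) ≠ w₂ := Fin.val_injective.ne hne
  exact Fin.ext (by omega)

lemma isIndepSet_colorClass (hc : IsDominatorColoring (pathArc n o) c) (a : Fin m) :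
    (pathGraph n).IsIndepSet (colorClass c a : Set (Fin n)) := by
  intro u hu v hv _ huv
  rw [mem_coe, mem_colorClass] at hu hv
  rcases pathArc_or_pathArc_of_adj (o := o) huv with h | h
  · exact hc.1 u v h (hu.trans hv.symm)
  · exact hc.1 v u h (hv.trans hu.symm)

lemma isIndepSet_compl_tails (o : ℕ → Bool) :
    (pathGraph n).IsIndepSet ((tails (pathArc n o))ᶜ : Finset (Fin n)) := by
  intro u hu v hv _ huv
  simp only [mem_coe, mem_compl, mem_tails, not_exists] at hu hv
  rcases pathArc_or_pathArc_of_adj (o := o) huv with h | h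
  · exact hu v h
  · exact hv u h

lemma div_two_le_card_tails (o : ℕ → Bool) : n / 2 ≤ #(tails (pathArc n o)) := by
  have hsinks := card_le_of_isIndepSet_pathGraph (isIndepSet_compl_tails (n := n) o)
  have htails := card_le_univ (tails (pathArc n o))
  simp only [card_compl, Fintype.card_fin] at hsinks htails
  omega

lemma card_colorClass_add_card_dominators_le_three {a : Fin m}
    (ha : a ∈ dominatedColors (pathArc n o) c) :
    #(colorClass c a) + #(dominators (pathArc n o) c a) ≤ 3 := by
  obtain ⟨v₀, ⟨w₀, hw₀⟩, hv₀⟩ := mem_dominatedColors.1 ha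
  rcases le_or_gt #(colorClass c a) 1 with hcl | hcl
  · have : #(dominators (pathArc n o) c a) ≤ 2 :=
      card_le_two_of_forall_pathGraph_adj (v := w₀) fun v hv =>
        (pathArc_adj ((mem_dominators.1 hv).2 w₀ hw₀)).symm
    omega
  · obtain ⟨w₁, hw₁, w₂, hw₂, hne⟩ := one_lt_card.1 hcl
    rw [mem_colorClass] at hw₁ hw₂
    have hdom : #(dominators (pathArc n o) c a) ≤ 1 := card_le_one.2 fun u hu v hv => by
      rw [mem_dominators] at hu hv
      exact eq_of_pathGraph_adj_of_adj hne (pathArc_adj (hu.2 w₁ hw₁))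
        (pathArc_adj (hu.2 w₂ hw₂)) (pathArc_adj (hv.2 w₁ hw₁))
        (pathArc_adj (hv.2 w₂ hw₂))
    have : #(colorClass c a) ≤ 2 := card_le_two_of_forall_pathGraph_adj (v := v₀) fun w hw =>
      pathArc_adj (hv₀ w (mem_colorClass.1 hw))
    omega

lemma exists_dominatedColor_near (hc : IsDominatorColoring (pathArc n o) c) {i : ℕ}
    (hi : i + 1 < n) :
    ∃ a ∈ dominatedColors (pathArc n o) c,
      ∀ w, c w = a → i ≤ (w : ℕ) + 1 ∧ (w : ℕ) ≤ i + 2 := by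
  obtain ⟨v, hv, hvw⟩ :
      ∃ v : Fin n, ((v : ℕ) = i ∨ (v : ℕ) = i + 1) ∧ ∃ w, pathArc n o v w := by
    rcases pathArc_or_pathArc_of_adj (o := o) (u := ⟨i, by omega⟩) (v := ⟨i + 1, hi⟩)
      (pathGraph_adj.2 (Or.inl rfl)) with h | h
    · exact ⟨_, Or.inl rfl, _, h⟩
    · exact ⟨_, Or.inr rfl, _, h⟩
  obtain ⟨a, ha⟩ := hc.2 v hvw
  refine ⟨a, mem_dominatedColors.2 ⟨v, ha⟩, fun w hw => ?_⟩
  have := pathGraph_adj.1 (pathArc_adj (ha.2 w hw))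
  omega

lemma le_card_dominatedColors (hc : IsDominatorColoring (pathArc n o) c) :
    (n + 2) / 4 ≤ #(dominatedColors (pathArc n o) c) := by
  have hnear (j : Fin ((n + 2) / 4)) : ∃ a ∈ dominatedColors (pathArc n o) c,
      ∀ w, c w = a → 4 * (j : ℕ) ≤ (w : ℕ) + 1 ∧ (w : ℕ) ≤ 4 * j + 2 :=
    exists_dominatedColor_near hc (by omega)
  choose f hfD hf using hnear
  calc (n + 2) / 4 = #(univ : Finset (Fin ((n + 2) / 4))) := by simp
    _ ≤ _ := card_le_card_of_injOn f (fun j _ => hfD j) fun i _ j _ hij => by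
      obtain ⟨-, ⟨w, hw⟩, -⟩ := mem_dominatedColors.1 (hfD i)
      have := hf i w hw
      have := hf j w (hw.trans hij)
      exact Fin.ext (by omega)

lemma not_isDominatorColoring_pathArc_four (hm : m ≤ 2) (c : Fin 4 → Fin m) :
    ¬ IsDominatorColoring (pathArc 4 o) c := by
  -- `pathArc 4 o` only reads `o 0`, `o 1`, `o 2`, which leaves finitely many cases to check.
  have key : ∀ (o' : Fin 3 → Bool) (c' : Fin 4 → Fin 2),
      ¬ IsDominatorColoring (pathArc 4 fun i => o' (Fin.ofNat 3 i)) c' := by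
    unfold IsDominatorColoring Dominates pathArc
    decide
  intro hc
  rw [pathArc_congr (o' := fun i => (fun j : Fin 3 => o j) (Fin.ofNat 3 i))
    (fun i hi => by simp [Nat.mod_eq_of_lt (show i < 3 by omega)])] at hc
  exact key (fun j => o j) _ (hc.comp_injective (Fin.castLE_injective hm))

set_option maxRecDepth 10000 in
lemma mem_and_notMem_of_isIndepSet_pathGraph_seven {S : Finset (Fin 7)}
    (hS : (pathGraph 7).IsIndepSet (S : Set (Fin 7))) (hcard : 4 ≤ #S) :
    0 ∈ S ∧ 2 ∈ S ∧ 1 ∉ S := by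
  have key : ∀ S : Finset (Fin 7), (∀ u ∈ S, ∀ v ∈ S, (u : ℕ) + 1 ≠ v) →
      4 ≤ #S → 0 ∈ S ∧ 2 ∈ S ∧ 1 ∉ S := by
    decide
  refine key S (fun u hu v hv huv => hS hu hv ?_ (pathGraph_adj.2 (Or.inl huv))) hcard
  exact fun h => by subst h; omega

lemma four_le_card_tails_seven {c : Fin 7 → Fin m} (hc : IsDominatorColoring (pathArc 7 o) c)
    {b : Fin m} (hb : b ∉ dominatedColors (pathArc 7 o) c) (hB : 4 ≤ #(colorClass c b)) :
    4 ≤ #(tails (pathArc 7 o)) := by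
  by_contra! hT
  have hsinks : 4 ≤ #(tails (pathArc 7 o))ᶜ := by
    rw [card_compl, Fintype.card_fin]; omega
  obtain ⟨-, -, h1⟩ :=
    mem_and_notMem_of_isIndepSet_pathGraph_seven (isIndepSet_compl_tails o) hsinks
  obtain ⟨h0, h2, -⟩ :=
    mem_and_notMem_of_isIndepSet_pathGraph_seven (isIndepSet_colorClass hc b) hB
  rw [mem_compl, not_not, mem_tails] at h1
  obtain ⟨a, ⟨w, hw⟩, hdom⟩ := hc.2 1 h1
  have hwb : c w = b := by
    have := pathGraph_adj.1 (pathArc_adj (hdom w hw))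
    obtain rfl | rfl : w = 0 ∨ w = 2 := by omega
    · exact mem_colorClass.1 h0
    · exact mem_colorClass.1 h2
  obtain rfl : a = b := hw.symm.trans hwb
  exact hb (mem_dominatedColors.2 ⟨1, ⟨w, hw⟩, hdom⟩)

lemma le_of_isDominatorColoring_pathArc (hc : IsDominatorColoring (pathArc n o) c)
    (hn : 4 ≤ n) (hn6 : n ≠ 6) : (n + 2) / 4 + 2 ≤ m := by
  by_contra! hm
  have hD := le_card_dominatedColors hc
  have hDm := card_le_univ (dominatedColors (pathArc n o) c)
  have hT := div_two_le_card_tails (n := n) o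
  have hcount :=
    card_add_card_tails_le hc fun _ ha => card_colorClass_add_card_dominators_le_three ha
  rw [Fintype.card_fin] at hcount hDm
  set D := dominatedColors (pathArc n o) c
  rcases eq_empty_or_eq_colorClass_or_card_add_two_le c D with h | ⟨b, hb, h⟩ | h
  · rw [h, card_empty] at hcount
    obtain rfl : n = 4 := by omega
    exact not_isDominatorColoring_pathArc_four (by omega) c hc
  · have hbm : #D < m := by simpa using card_lt_univ_of_notMem hb
    have hB := card_le_of_isIndepSet_pathGraph (isIndepSet_colorClass hc b)
    rw [h] at hcount
    obtain rfl : n = 7 := by omega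
    have := four_le_card_tails_seven hc hb (by omega)
    omega
  · rw [Fintype.card_fin] at h
    omega

end Path

theorem domChrom_orientations_of_path_lower_bound_general (n k : ℕ) (hn : 4 ≤ n) (hn6 : n ≠ 6)
    (o : ℕ → Bool) :
    (n = 4 * k → k + 2 ≤ domChrom (pathArc n o)) ∧
    (n = 4 * k + 1 → k + 2 ≤ domChrom (pathArc n o)) ∧
    (n = 4 * k + 2 → k + 3 ≤ domChrom (pathArc n o)) ∧
    (n = 4 * k + 3 → k + 3 ≤ domChrom (pathArc n o)) := by
  obtain ⟨c, hc⟩ := exists_isDominatorColoring_domChrom (A := pathArc n o)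
    fun _ h => (pathArc_adj h).ne rfl
  have := le_of_isDominatorColoring_pathArc hc hn hn6
  refine ⟨?_, ?_, ?_, ?_⟩ <;> rintro rfl <;> omega

theorem domChrom_orientations_of_path_lower_bound (n k : ℕ) (hn : 4 ≤ n) (hn6 : n ≠ 6)
    (hk : 1 ≤ k) (o : ℕ → Bool) :
    (n = 4 * k → k + 2 ≤ domChrom (pathArc n o)) ∧
    (n = 4 * k + 1 → k + 2 ≤ domChrom (pathArc n o)) ∧
    (n = 4 * k + 2 → k + 3 ≤ domChrom (pathArc n o)) ∧
    (n = 4 * k + 3 → k + 3 ≤ domChrom (pathArc n o)) :=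
  domChrom_orientations_of_path_lower_bound_general n k hn hn6 o
end
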